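/- arXiv:2103.13462 — 6 statements merged into one kernel-verified Lean document; each statement's English description precedes it below -/
import Mathlib

section
/- Let M be a symmetric positive semidefinite d×d matrix with top eigenvalue λ₁, and g(x) = (1/2)‖M − xxᵀ‖_F². If x satisfies ∇g(x) = 0 and ∇²g(x) ⪰ 0 (the Hessian 2xxᵀ − M + ‖x‖₂² I is positive semidefinite), then ‖x‖₂² = λ₁, i.e., x is a top eigenvector of M (or λ₁ = 0 and x = 0). Consequently x is a global minimizer of g. -/
/-!
Stationarity says `M x = ‖x‖² x`. Testing the top-eigenvalue bound at `x` gives `‖x‖⁴ ≤ λ₁ ‖x‖²`,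
hence `‖x‖² ≤ λ₁` (using `λ₁ ≥ 0` when `x = 0`). Testing the Hessian at a top eigenvector `v`
gives the reverse inequality, so `‖x‖² = λ₁`. Finally
`2 g(y) = ‖M‖² - 2 yᵀ M y + ‖y‖⁴ ≥ ‖M‖² - λ₁² + (‖y‖² - λ₁)² ≥ ‖M‖² - λ₁² = 2 g(x)`.
-/

open Matrix Finset

section

variable {n R : Type*} [Fintype n]

lemma dotProduct_self_eq_sum_sq [CommSemiring R] (v : n → R) : v ⬝ᵥ v = ∑ i, v i ^ 2 := by
  simp only [dotProduct, sq]

lemma dotProduct_vecMulVec_sub_add_smul_one_mulVec [CommRing R] [DecidableEq n]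
    (M : Matrix n n R) (c s : R) (x v : n → R) :
    v ⬝ᵥ ((c • vecMulVec x x - M + s • 1) *ᵥ v) =
      c * (x ⬝ᵥ v) ^ 2 - v ⬝ᵥ M *ᵥ v + s * (v ⬝ᵥ v) := by
  simp only [add_mulVec, sub_mulVec, smul_mulVec, vecMulVec_mulVec, one_mulVec, op_smul_eq_smul,
    dotProduct_add, dotProduct_sub, dotProduct_smul, smul_eq_mul, dotProduct_comm v x]
  ring

lemma sum_sum_sub_mul_sq [CommRing R] (M : Matrix n n R) (y : n → R) :
    ∑ i, ∑ j, (M i j - y i * y j) ^ 2 =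
      ∑ i, ∑ j, M i j ^ 2 - 2 * (y ⬝ᵥ M *ᵥ y) + (y ⬝ᵥ y) ^ 2 := by
  have hcross : y ⬝ᵥ M *ᵥ y = ∑ i, ∑ j, y i * (M i j * y j) := by
    simp only [dotProduct, mulVec, Finset.mul_sum]
  have hquartic : (y ⬝ᵥ y) ^ 2 = ∑ i, ∑ j, (y i * y j) ^ 2 := by
    simp only [dotProduct, sq, Finset.sum_mul_sum]
    exact Finset.sum_congr rfl fun i _ => Finset.sum_congr rfl fun j _ => by ring
  simp only [hcross, hquartic, Finset.mul_sum, ← Finset.sum_sub_distrib, ← Finset.sum_add_distrib]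
  exact Finset.sum_congr rfl fun i _ => Finset.sum_congr rfl fun j _ => by ring

end

section

variable {n : Type*} [Fintype n] {M : Matrix n n ℝ} {lam : ℝ} {x v : n → ℝ}

lemma Matrix.PosSemidef.nonneg_of_mulVec_eq_smul (hM : M.PosSemidef) (hv : v ≠ 0)
    (hMv : M *ᵥ v = lam • v) : 0 ≤ lam := by
  have hq := hM.dotProduct_mulVec_nonneg v
  rw [star_trivial, hMv, dotProduct_smul, smul_eq_mul] at hq
  have hvv : 0 < v ⬝ᵥ v := by simpa only [star_trivial] using dotProduct_star_self_pos_iff.mpr hv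
  exact nonneg_of_mul_nonneg_left hq hvv

lemma dotProduct_self_le_of_mulVec_eq_smul (htop : ∀ w, w ⬝ᵥ M *ᵥ w ≤ lam * (w ⬝ᵥ w))
    (hlam : 0 ≤ lam) (hx : M *ᵥ x = (x ⬝ᵥ x) • x) : x ⬝ᵥ x ≤ lam := by
  have hq := htop x
  rw [hx, dotProduct_smul, smul_eq_mul] at hq
  have hx0 : 0 ≤ x ⬝ᵥ x := by simpa only [star_trivial] using dotProduct_star_self_nonneg x
  rcases hx0.eq_or_lt with hzero | hxpos
  · rwa [← hzero]
  · exact le_of_mul_le_mul_right hq hxpos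

/- Either `x ⬝ᵥ M v`, computed once from each side, gives `‖x‖² = λ`, or `x ⟂ v`, and then the
Hessian tested against `v` reads `(‖x‖² - λ) ‖v‖² ≥ 0`. -/
lemma le_dotProduct_self_of_posSemidef_hessian [DecidableEq n] (hM : M.IsSymm) (hv : v ≠ 0)
    (hMv : M *ᵥ v = lam • v) (hx : M *ᵥ x = (x ⬝ᵥ x) • x)
    (hH : ((2 : ℝ) • vecMulVec x x - M + (x ⬝ᵥ x) • 1).PosSemidef) : lam ≤ x ⬝ᵥ x := by
  have hcross : (x ⬝ᵥ x - lam) * (x ⬝ᵥ v) = 0 := by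
    have hleft : x ⬝ᵥ M *ᵥ v = lam * (x ⬝ᵥ v) := by rw [hMv, dotProduct_smul, smul_eq_mul]
    have hright : x ⬝ᵥ M *ᵥ v = (x ⬝ᵥ x) * (x ⬝ᵥ v) := by
      rw [dotProduct_mulVec, ← mulVec_transpose, hM.eq, hx, smul_dotProduct, smul_eq_mul]
    linarith
  rcases mul_eq_zero.mp hcross with hs | hxv
  · linarith
  · have hq := hH.dotProduct_mulVec_nonneg v
    rw [star_trivial, dotProduct_vecMulVec_sub_add_smul_one_mulVec, hxv, hMv, dotProduct_smul,
      smul_eq_mul] at hq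
    have hvv : 0 < v ⬝ᵥ v := by
      simpa only [star_trivial] using dotProduct_star_self_pos_iff.mpr hv
    nlinarith

lemma sum_sum_sub_mul_sq_le (htop : ∀ w, w ⬝ᵥ M *ᵥ w ≤ lam * (w ⬝ᵥ w))
    (hx : M *ᵥ x = lam • x) (hxx : x ⬝ᵥ x = lam) (y : n → ℝ) :
    ∑ i, ∑ j, (M i j - x i * x j) ^ 2 ≤ ∑ i, ∑ j, (M i j - y i * y j) ^ 2 := by
  have hxMx : x ⬝ᵥ M *ᵥ x = lam * lam := by rw [hx, dotProduct_smul, hxx, smul_eq_mul]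
  rw [sum_sum_sub_mul_sq, sum_sum_sub_mul_sq, hxMx, hxx]
  nlinarith [htop y, sq_nonneg (y ⬝ᵥ y - lam)]

end

theorem stmt1_general {d : ℕ} (M : Matrix (Fin d) (Fin d) ℝ)
    (hPSD : M.PosSemidef)
    (lam1 : ℝ)
    (htop : ∀ v : Fin d → ℝ, v ⬝ᵥ M.mulVec v ≤ lam1 * (v ⬝ᵥ v))
    (heig : ∃ v : Fin d → ℝ, v ≠ 0 ∧ M.mulVec v = lam1 • v)
    (x : Fin d → ℝ)
    (hstat : (∑ i, x i ^ 2) • x - M.mulVec x = 0)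
    (hHess : ((2 : ℝ) • vecMulVec x x - M + (∑ i, x i ^ 2) • (1 : Matrix (Fin d) (Fin d) ℝ)).PosSemidef) :
    (∑ i, x i ^ 2) = lam1 ∧
      ∀ y : Fin d → ℝ,
        (1 / 2 : ℝ) * ∑ i, ∑ j, (M i j - x i * x j) ^ 2 ≤
          (1 / 2 : ℝ) * ∑ i, ∑ j, (M i j - y i * y j) ^ 2 := by
  obtain ⟨v, hv, hMv⟩ := heig
  rw [← dotProduct_self_eq_sum_sq] at hstat hHess ⊢
  have hMx : M *ᵥ x = (x ⬝ᵥ x) • x := (sub_eq_zero.mp hstat).symm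
  have hlam : 0 ≤ lam1 := hPSD.nonneg_of_mulVec_eq_smul hv hMv
  have hs : x ⬝ᵥ x = lam1 :=
    le_antisymm (dotProduct_self_le_of_mulVec_eq_smul htop hlam hMx)
      (le_dotProduct_self_of_posSemidef_hessian (isHermitian_iff_isSymm.mp hPSD.1) hv hMv hMx
        hHess)
  refine ⟨hs, fun y => ?_⟩
  gcongr 1 / 2 * ?_
  exact sum_sum_sub_mul_sq_le htop (hs ▸ hMx) hs y

/-- M symmetric PSD with top eigenvalue λ₁, g(x) = (1/2)‖M − xxᵀ‖_F².
If ∇g(x) = 0 and the Hessian 2xxᵀ − M + ‖x‖₂² I is PSD, then ‖x‖₂² = λ₁ and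
x is a global minimizer of g. -/
theorem stmt1 {d : ℕ} (M : Matrix (Fin d) (Fin d) ℝ)
    (hSymm : M.IsSymm) (hPSD : M.PosSemidef)
    (lam1 : ℝ)
    (htop : ∀ v : Fin d → ℝ, v ⬝ᵥ M.mulVec v ≤ lam1 * (v ⬝ᵥ v))
    (heig : ∃ v : Fin d → ℝ, v ≠ 0 ∧ M.mulVec v = lam1 • v)
    (x : Fin d → ℝ)
    (hstat : (∑ i, x i ^ 2) • x - M.mulVec x = 0)
    (hHess : ((2 : ℝ) • vecMulVec x x - M + (∑ i, x i ^ 2) • (1 : Matrix (Fin d) (Fin d) ℝ)).PosSemidef) :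
    (∑ i, x i ^ 2) = lam1 ∧
      ∀ y : Fin d → ℝ,
        (1 / 2 : ℝ) * ∑ i, ∑ j, (M i j - x i * x j) ^ 2 ≤
          (1 / 2 : ℝ) * ∑ i, ∑ j, (M i j - y i * y j) ^ 2 :=
  stmt1_general M hPSD lam1 htop heig x hstat hHess
end

section
/- Suppose f : ℝ^d → ℝ is differentiable, has L-Lipschitz continuous gradient, and satisfies the Polyak–Łojasiewicz inequality ‖∇f(x)‖₂² ≥ μ (f(x) − f(x*)) ≥ 0 for all x, with μ > 0. Then gradient descent x_{k+1} = x_k − η∇f(x_k) with step size η = 1/L satisfies f(x_k) − f(x*) ≤ (1 − μ/(2L))^k (f(x₀) − f(x*)), i.e., the suboptimality decays geometrically. -/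
/-!
The Lipschitz gradient gives the descent lemma `f (x + v) ≤ f x + ⟪∇f x, v⟫ + L/2 ‖v‖²` (the
function `t ↦ f (x + t v) - t ⟪∇f x, v⟫ - L/2 t² ‖v‖²` has nonpositive derivative for `t ≥ 0`), so a
gradient step of length `1/L` decreases `f` by at least `‖∇f x‖² / (2L)`. The PL inequality turns
this decrease into a fixed fraction `μ/(2L)` of the suboptimality gap, which therefore shrinks
geometrically.
-/

open Real InnerProductSpace Set

section Descent

variable {E : Type*} [NormedAddCommGroup E] [InnerProductSpace ℝ E] [CompleteSpace E]
  {f : E → ℝ} {L : ℝ}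

theorem descent_lemma (hf : Differentiable ℝ f)
    (hLip : ∀ x y, ‖gradient f x - gradient f y‖ ≤ L * ‖x - y‖) (x v : E) :
    f (x + v) ≤ f x + ⟪gradient f x, v⟫_ℝ + L / 2 * ‖v‖ ^ 2 := by
  set g : ℝ → ℝ := fun t ↦ f (x + t • v) - t * ⟪gradient f x, v⟫_ℝ - L / 2 * t ^ 2 * ‖v‖ ^ 2
  have hg : ∀ t, HasDerivAt g
      (⟪gradient f (x + t • v), v⟫_ℝ - ⟪gradient f x, v⟫_ℝ - L * t * ‖v‖ ^ 2) t := by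
    intro t
    have hline : HasDerivAt (fun t : ℝ ↦ x + t • v) v t := by
      simpa using ((hasDerivAt_id t).smul_const v).const_add x
    have hf_line := (hf (x + t • v)).hasGradientAt.hasFDerivAt.comp_hasDerivAt t hline
    rw [toDual_apply_apply] at hf_line
    refine ((hf_line.sub ((hasDerivAt_id t).mul_const ⟪gradient f x, v⟫_ℝ)).sub
      (((hasDerivAt_pow 2 t).const_mul (L / 2)).mul_const (‖v‖ ^ 2))).congr_deriv ?_
    simp only [one_mul, Nat.cast_ofNat]
    ring
  have hg' : ∀ t ∈ interior (Ici (0 : ℝ)),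
      ⟪gradient f (x + t • v), v⟫_ℝ - ⟪gradient f x, v⟫_ℝ - L * t * ‖v‖ ^ 2 ≤ 0 := by
    intro t ht
    rw [interior_Ici, mem_Ioi] at ht
    have := calc ⟪gradient f (x + t • v), v⟫_ℝ - ⟪gradient f x, v⟫_ℝ
        = ⟪gradient f (x + t • v) - gradient f x, v⟫_ℝ := (inner_sub_left _ _ _).symm
      _ ≤ ‖gradient f (x + t • v) - gradient f x‖ * ‖v‖ := real_inner_le_norm _ _
      _ ≤ L * ‖x + t • v - x‖ * ‖v‖ := by gcongr; exact hLip _ _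
      _ = L * t * ‖v‖ ^ 2 := by
        rw [add_sub_cancel_left, norm_smul, norm_of_nonneg ht.le]; ring
    linarith
  have hanti : AntitoneOn g (Ici 0) :=
    antitoneOn_of_hasDerivWithinAt_nonpos (convex_Ici 0)
      (fun t _ ↦ (hg t).continuousAt.continuousWithinAt)
      (fun t _ ↦ (hg t).hasDerivWithinAt) hg'
  have := hanti self_mem_Ici (mem_Ici.2 zero_le_one) zero_le_one
  simp only [g, zero_smul, add_zero, one_smul, zero_mul, sub_zero, one_mul, one_pow,
    ne_eq, OfNat.ofNat_ne_zero, not_false_eq_true, zero_pow, mul_zero] at this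
  linarith

theorem gradient_step_le (hf : Differentiable ℝ f) (hL : 0 < L)
    (hLip : ∀ x y, ‖gradient f x - gradient f y‖ ≤ L * ‖x - y‖) (x : E) :
    f (x - (1 / L) • gradient f x) ≤ f x - ‖gradient f x‖ ^ 2 / (2 * L) := by
  have h := descent_lemma hf hLip x (-((1 / L) • gradient f x))
  rw [← sub_eq_add_neg, inner_neg_right, real_inner_smul_right, real_inner_self_eq_norm_sq,
    norm_neg, norm_smul, norm_of_nonneg (by positivity)] at h
  calc f (x - (1 / L) • gradient f x)
      ≤ f x + -(1 / L * ‖gradient f x‖ ^ 2) + L / 2 * (1 / L * ‖gradient f x‖) ^ 2 := h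
    _ = f x - ‖gradient f x‖ ^ 2 / (2 * L) := by field_simp; ring

end Descent

theorem le_pow_mul_of_le_mul {R : Type*} [CommRing R] [LinearOrder R] [IsStrictOrderedRing R]
    {a : ℕ → R} {c : R} (ha : ∀ k, 0 ≤ a k) (hstep : ∀ k, a (k + 1) ≤ c * a k) (k : ℕ) :
    a k ≤ c ^ k * a 0 := by
  rcases le_or_gt 0 c with hc | hc
  · induction k with
    | zero => simp
    | succ k ih =>
      calc a (k + 1) ≤ c * a k := hstep k
        _ ≤ c * (c ^ k * a 0) := mul_le_mul_of_nonneg_left ih hc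
        _ = c ^ (k + 1) * a 0 := by ring
  · have ha0 : a 0 = 0 := by nlinarith [hstep 0, ha 0, ha 1]
    rw [ha0, mul_zero]
    cases k with
    | zero => exact ha0.le
    | succ k => nlinarith [hstep k, ha k]

theorem stmt3_general {d : ℕ} (f : EuclideanSpace ℝ (Fin d) → ℝ)
    (hdiff : Differentiable ℝ f)
    (L : ℝ) (hL : 0 < L)
    (hLip : ∀ x y, ‖gradient f x - gradient f y‖ ≤ L * ‖x - y‖)
    (xstar : EuclideanSpace ℝ (Fin d)) (μ : ℝ)
    (hPL : ∀ x, μ * (f x - f xstar) ≤ ‖gradient f x‖ ^ 2 ∧ 0 ≤ f x - f xstar)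
    (x : ℕ → EuclideanSpace ℝ (Fin d))
    (hGD : ∀ k, x (k + 1) = x k - (1 / L) • gradient f (x k)) :
    ∀ k, f (x k) - f xstar ≤ (1 - μ / (2 * L)) ^ k * (f (x 0) - f xstar) := by
  refine le_pow_mul_of_le_mul (fun k ↦ (hPL (x k)).2) fun k ↦ ?_
  have hdecrease := gradient_step_le hdiff hL hLip (x k)
  have hgap : μ * (f (x k) - f xstar) / (2 * L) ≤ ‖gradient f (x k)‖ ^ 2 / (2 * L) := by
    gcongr
    exact (hPL (x k)).1
  rw [hGD k]
  calc f (x k - (1 / L) • gradient f (x k)) - f xstar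
      ≤ f (x k) - f xstar - μ * (f (x k) - f xstar) / (2 * L) := by linarith
    _ = (1 - μ / (2 * L)) * (f (x k) - f xstar) := by ring

/-- If f is differentiable with L-Lipschitz gradient and satisfies the
PL inequality ‖∇f(x)‖² ≥ μ(f(x) − f(x*)) ≥ 0 with μ > 0, then gradient descent with
step size 1/L satisfies f(x_k) − f(x*) ≤ (1 − μ/(2L))^k (f(x₀) − f(x*)). -/
theorem stmt3 {d : ℕ} (f : EuclideanSpace ℝ (Fin d) → ℝ)
    (hdiff : Differentiable ℝ f)
    (L : ℝ) (hL : 0 < L)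
    (hLip : ∀ x y, ‖gradient f x - gradient f y‖ ≤ L * ‖x - y‖)
    (xstar : EuclideanSpace ℝ (Fin d)) (μ : ℝ) (hμ : 0 < μ)
    (hPL : ∀ x, μ * (f x - f xstar) ≤ ‖gradient f x‖ ^ 2 ∧ 0 ≤ f x - f xstar)
    (x : ℕ → EuclideanSpace ℝ (Fin d))
    (hGD : ∀ k, x (k + 1) = x k - (1 / L) • gradient f (x k)) :
    ∀ k, f (x k) - f xstar ≤ (1 - μ / (2 * L)) ^ k * (f (x 0) - f xstar) :=
  stmt3_general f hdiff L hL hLip xstar μ hPL x hGD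
end

section
/- In the generalized linear model with ‖x‖₂ ≤ B almost surely, ‖w*‖₂ ≤ R, and σ strictly increasing, differentiable with σ'(t) ≥ γ > 0 on [−BR, BR], the population risk L(w) = (1/2)E[(y − σ(wᵀx))²] is 2γ-weakly-quasi-convex on {w : ‖w‖₂ ≤ R} with respect to w*: ⟨∇L(w), w − w*⟩ ≥ 2γ(L(w) − L(w*)). -/
/-!
Write `Δ = σ(wᵀx) - σ(w*ᵀx)`. Since `E[ε | x] = 0`, the noise is orthogonal to the bounded
function `Δ` of `x`, so `L w - L w* = E[Δ²] / 2`, while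
`⟨∇L(w), w - w*⟩ = E[Δ σ'(wᵀx) (wᵀx - w*ᵀx)]`.
By Cauchy–Schwarz both `wᵀx` and `w*ᵀx` lie in `[-BR, BR]`, where `σ` is monotone and
`1`-Lipschitz; hence `Δ² ≤ Δ (wᵀx - w*ᵀx)`, and `σ'(wᵀx) ≥ γ` gives the inequality pointwise.
-/

open MeasureTheory Finset

theorem abs_sum_mul_le_of_sqrt_sum_sq_le {ι : Type*} (s : Finset ι) {v x : ι → ℝ} {B R : ℝ}
    (hx : √(∑ i ∈ s, x i ^ 2) ≤ B) (hv : √(∑ i ∈ s, v i ^ 2) ≤ R) :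
    |∑ i ∈ s, v i * x i| ≤ B * R := by
  have hCS : √(∑ i ∈ s, v i ^ 2) * √(∑ i ∈ s, x i ^ 2) ≤ B * R := by
    rw [mul_comm B]
    exact mul_le_mul hv hx (Real.sqrt_nonneg _) ((Real.sqrt_nonneg _).trans hv)
  have hneg := Real.sum_mul_le_sqrt_mul_sqrt s (fun i => -v i) x
  simp only [neg_mul, sum_neg_distrib, even_two, Even.neg_pow] at hneg
  exact abs_le.2 ⟨by linarith, (Real.sum_mul_le_sqrt_mul_sqrt s v x).trans hCS⟩

/-- Pointwise weak quasi-convexity, with `g` in the role of `σ' a`. -/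
theorem Monotone.mul_sq_sub_le {σ : ℝ → ℝ} (hσ : Monotone σ) {γ g a b : ℝ} (hγ : 0 ≤ γ)
    (hγg : γ ≤ g) (hlip : |σ a - σ b| ≤ |a - b|) :
    γ * (σ a - σ b) ^ 2 ≤ (σ a - σ b) * g * (a - b) := by
  have hsign : 0 ≤ (σ a - σ b) * (a - b) := by
    rcases le_total a b with h | h
    · exact mul_nonneg_of_nonpos_of_nonpos (sub_nonpos.2 (hσ h)) (sub_nonpos.2 h)
    · exact mul_nonneg (sub_nonneg.2 (hσ h)) (sub_nonneg.2 h)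
  have hsq : (σ a - σ b) ^ 2 ≤ (σ a - σ b) * (a - b) := by
    calc (σ a - σ b) ^ 2 = |σ a - σ b| * |σ a - σ b| := by rw [abs_mul_abs_self, sq]
      _ ≤ |σ a - σ b| * |a - b| := mul_le_mul_of_nonneg_left hlip (abs_nonneg _)
      _ = (σ a - σ b) * (a - b) := by rw [← abs_mul, abs_of_nonneg hsign]
  calc γ * (σ a - σ b) ^ 2 ≤ γ * ((σ a - σ b) * (a - b)) := mul_le_mul_of_nonneg_left hsq hγ
    _ ≤ g * ((σ a - σ b) * (a - b)) := mul_le_mul_of_nonneg_right hγg hsign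
    _ = (σ a - σ b) * g * (a - b) := by ring

section Integrals

variable {Ω : Type*} {m m₀ : MeasurableSpace Ω} {μ : Measure Ω}

theorem integral_mul_eq_zero_of_condExp_eq_zero [IsFiniteMeasure μ] (hm : m ≤ m₀)
    {f ε : Ω → ℝ} (hf : StronglyMeasurable[m] f) (hfε : Integrable (f * ε) μ)
    (hε : Integrable ε μ) (hcond : μ[ε | m] =ᵐ[μ] 0) :
    ∫ ω, f ω * ε ω ∂μ = 0 := by
  have hpull : μ[f * ε | m] =ᵐ[μ] 0 := by
    filter_upwards [condExp_mul_of_stronglyMeasurable_left hf hfε hε, hcond] with ω h h0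
    simp [h, h0]
  calc ∫ ω, f ω * ε ω ∂μ = ∫ ω, (μ[f * ε | m]) ω ∂μ := (integral_condExp hm).symm
    _ = 0 := by simp [integral_congr_ae hpull]

theorem integral_sub_sq_of_integral_mul_eq_zero {f ε : Ω → ℝ}
    (hf : Integrable (fun ω => f ω ^ 2) μ) (hε : Integrable (fun ω => ε ω ^ 2) μ)
    (hfε : Integrable (fun ω => f ω * ε ω) μ) (horth : ∫ ω, f ω * ε ω ∂μ = 0) :
    ∫ ω, (ε ω - f ω) ^ 2 ∂μ = ∫ ω, f ω ^ 2 ∂μ + ∫ ω, ε ω ^ 2 ∂μ := by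
  have hexpand : ∀ ω, (ε ω - f ω) ^ 2 = f ω ^ 2 - 2 * (f ω * ε ω) + ε ω ^ 2 := fun ω => by ring
  simp_rw [hexpand]
  have hfε2 : Integrable (fun ω => 2 * (f ω * ε ω)) μ := hfε.const_mul 2
  rw [integral_add (f := fun ω => f ω ^ 2 - 2 * (f ω * ε ω)) (hf.sub hfε2) hε,
    integral_sub hf hfε2, integral_const_mul, horth]
  ring

/-- Bias-variance decomposition. -/
theorem integral_sq_sub_eq_add_of_condExp_eq_zero [IsFiniteMeasure μ] {E : Type*}
    [MeasurableSpace E] {X : Ω → E} (hX : Measurable X) {f fstar : E → ℝ} (hf : Measurable f)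
    (hfstar : Measurable fstar) {C : ℝ} (hC : ∀ᵐ ω ∂μ, |f (X ω) - fstar (X ω)| ≤ C)
    {ε y : Ω → ℝ} (hε : MemLp ε 2 μ) (hy : ∀ ω, y ω = fstar (X ω) + ε ω)
    (hcond : μ[ε | MeasurableSpace.comap X inferInstance] =ᵐ[μ] 0) :
    ∫ ω, (y ω - f (X ω)) ^ 2 ∂μ
      = ∫ ω, (f (X ω) - fstar (X ω)) ^ 2 ∂μ + ∫ ω, (y ω - fstar (X ω)) ^ 2 ∂μ := by
  have hΔ : Measurable fun x => f x - fstar x := hf.sub hfstar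
  have hΔX : AEStronglyMeasurable (fun ω => f (X ω) - fstar (X ω)) μ :=
    (hΔ.comp hX).aestronglyMeasurable
  have hεint : Integrable ε μ := hε.integrable one_le_two
  have hΔε : Integrable (fun ω => (f (X ω) - fstar (X ω)) * ε ω) μ := hεint.bdd_mul hΔX hC
  have hΔ2 : Integrable (fun ω => (f (X ω) - fstar (X ω)) ^ 2) μ := by
    simpa [sq] using (Integrable.of_bound hΔX _ hC).bdd_mul hΔX hC
  have horth : ∫ ω, (f (X ω) - fstar (X ω)) * ε ω ∂μ = 0 :=
    integral_mul_eq_zero_of_condExp_eq_zero hX.comap_le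
      (hΔ.comp (comap_measurable X)).stronglyMeasurable hΔε hεint hcond
  have hres : ∀ ω, y ω - f (X ω) = ε ω - (f (X ω) - fstar (X ω)) := fun ω => by rw [hy]; ring
  have hnoise : ∀ ω, y ω - fstar (X ω) = ε ω := fun ω => by rw [hy]; ring
  simp only [hres, hnoise]
  exact integral_sub_sq_of_integral_mul_eq_zero hΔ2 hε.integrable_sq hΔε horth

theorem integrable_mul_sum_mul_sub {ι : Type*} [Fintype ι] {F : Ω → ℝ} {X : Ω → ι → ℝ}
    (h : ∀ i, Integrable (fun ω => F ω * X ω i) μ) (v u : ι → ℝ) :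
    Integrable (fun ω => F ω * (∑ i, v i * X ω i - ∑ i, u i * X ω i)) μ := by
  simp_rw [← sum_sub_distrib, ← sub_mul, mul_sum]
  exact integrable_finsetSum _ fun i _ => by
    simpa [mul_left_comm] using (h i).const_mul (v i - u i)

theorem sum_integral_mul_mul_sub {ι : Type*} [Fintype ι] {F : Ω → ℝ} {X : Ω → ι → ℝ}
    (h : ∀ i, Integrable (fun ω => F ω * X ω i) μ) (v u : ι → ℝ) :
    ∑ i, (∫ ω, F ω * X ω i ∂μ) * (v i - u i)
      = ∫ ω, F ω * (∑ i, v i * X ω i - ∑ i, u i * X ω i) ∂μ := by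
  simp_rw [← sum_sub_distrib, ← sub_mul, mul_sum]
  rw [integral_finsetSum _ fun i _ => by simpa [mul_left_comm] using (h i).const_mul (v i - u i)]
  exact sum_congr rfl fun i _ => by rw [← integral_mul_const]; congr 1; ext ω; ring

end Integrals

theorem stmt10_general {d : ℕ} {Ω : Type*} [MeasurableSpace Ω]
    (μ : Measure Ω) [IsProbabilityMeasure μ]
    (X : Ω → Fin d → ℝ) (hX : Measurable X)
    (ε : Ω → ℝ) (hε : Measurable ε)
    (σ : ℝ → ℝ) (hσmono : StrictMono σ) (hσdiff : Differentiable ℝ σ)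
    (B R γ : ℝ) (hγ : 0 < γ)
    (hXbound : ∀ᵐ ω ∂μ, Real.sqrt (∑ i, X ω i ^ 2) ≤ B)
    (wstar : Fin d → ℝ) (hwstar : Real.sqrt (∑ i, wstar i ^ 2) ≤ R)
    (hσderiv : ∀ t ∈ Set.Icc (-(B * R)) (B * R), γ ≤ deriv σ t ∧ deriv σ t ≤ 1)
    (y : Ω → ℝ)
    (hy : ∀ ω, y ω = σ (∑ i, wstar i * X ω i) + ε ω)
    (hcond : μ[ε | MeasurableSpace.comap X inferInstance] =ᵐ[μ] 0)
    (hint : ∀ w : Fin d → ℝ, Integrable (fun ω => (y ω - σ (∑ i, w i * X ω i)) ^ 2) μ)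
    (hintgrad : ∀ w : Fin d → ℝ, ∀ i : Fin d, Integrable
      (fun ω => (σ (∑ j, w j * X ω j) - σ (∑ j, wstar j * X ω j))
        * deriv σ (∑ j, w j * X ω j) * X ω i) μ)
    (L : (Fin d → ℝ) → ℝ)
    (hL : ∀ w, L w = (1 / 2 : ℝ) * ∫ ω, (y ω - σ (∑ i, w i * X ω i)) ^ 2 ∂μ)
    (gradL : (Fin d → ℝ) → (Fin d → ℝ))
    (hgradL : ∀ w i, gradL w i = ∫ ω, (σ (∑ j, w j * X ω j) - σ (∑ j, wstar j * X ω j))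
        * deriv σ (∑ j, w j * X ω j) * X ω i ∂μ) :
    ∀ w : Fin d → ℝ, Real.sqrt (∑ i, w i ^ 2) ≤ R →
      2 * γ * (L w - L wstar) ≤ ∑ i, gradL w i * (w i - wstar i) := by
  intro w hw
  have hlip : ∀ s ∈ Set.Icc (-(B * R)) (B * R), ∀ t ∈ Set.Icc (-(B * R)) (B * R),
      |σ s - σ t| ≤ |s - t| := fun s hs t ht => by
    simpa using (convex_Icc _ _).norm_image_sub_le_of_norm_deriv_le (fun x _ => hσdiff x)
      (fun x hx => abs_le.2 ⟨by linarith [hσderiv x hx], (hσderiv x hx).2⟩) ht hs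
  have hproj : ∀ v : Fin d → ℝ, √(∑ i, v i ^ 2) ≤ R →
      ∀ᵐ ω ∂μ, ∑ i, v i * X ω i ∈ Set.Icc (-(B * R)) (B * R) := fun v hv => by
    filter_upwards [hXbound] with ω hω
    exact abs_le.1 (abs_sum_mul_le_of_sqrt_sum_sq_le _ hω hv)
  have hεL2 : MemLp ε 2 μ :=
    (memLp_two_iff_integrable_sq hε.aestronglyMeasurable).2 (by simpa [hy] using hint wstar)
  have hexcess : L w - L wstar
      = 1 / 2 * ∫ ω, (σ (∑ i, w i * X ω i) - σ (∑ i, wstar i * X ω i)) ^ 2 ∂μ := by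
    have hbound : ∀ᵐ ω ∂μ, |σ (∑ i, w i * X ω i) - σ (∑ i, wstar i * X ω i)| ≤ 2 * (B * R) := by
      filter_upwards [hproj w hw, hproj wstar hwstar] with ω ha hb
      exact (hlip _ ha _ hb).trans
        (abs_sub_le_iff.2 ⟨by linarith [ha.2, hb.1], by linarith [ha.1, hb.2]⟩)
    have hσm : Measurable σ := hσdiff.continuous.measurable
    have hdecomp := integral_sq_sub_eq_add_of_condExp_eq_zero
      (f := fun x => σ (∑ i, w i * x i)) (fstar := fun x => σ (∑ i, wstar i * x i))
      hX (by fun_prop) (by fun_prop) hbound hεL2 hy hcond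
    rw [hL, hL, hdecomp]
    ring
  simp only [hexcess, hgradL, sum_integral_mul_mul_sub (hintgrad w), ← integral_const_mul]
  refine integral_mono_of_nonneg (.of_forall fun ω => by positivity)
    (integrable_mul_sum_mul_sub (hintgrad w) w wstar) ?_
  filter_upwards [hproj w hw, hproj wstar hwstar] with ω ha hb
  linarith [hσmono.monotone.mul_sq_sub_le hγ.le (hσderiv _ ha).1 (hlip _ ha _ hb)]

/-- In the generalized linear model with ‖x‖₂ ≤ B a.s., ‖w*‖₂ ≤ R,
σ strictly increasing and differentiable with γ ≤ σ' ≤ 1 on [−BR, BR], the population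
risk L(w) = (1/2)E[(y − σ(wᵀx))²] is 2γ-weakly-quasi-convex on {w : ‖w‖₂ ≤ R} w.r.t. w*:
⟨∇L(w), w − w*⟩ ≥ 2γ(L(w) − L(w*)), where
∇L(w) = E[(σ(wᵀx) − σ(w*ᵀx))σ'(wᵀx)x]. -/
theorem stmt10 {d : ℕ} {Ω : Type*} [MeasurableSpace Ω]
    (μ : Measure Ω) [IsProbabilityMeasure μ]
    (X : Ω → Fin d → ℝ) (hX : Measurable X)
    (ε : Ω → ℝ) (hε : Measurable ε)
    (σ : ℝ → ℝ) (hσmono : StrictMono σ) (hσdiff : Differentiable ℝ σ)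
    (B R γ : ℝ) (hB : 0 < B) (hR : 0 < R) (hγ : 0 < γ)
    (hXbound : ∀ᵐ ω ∂μ, Real.sqrt (∑ i, X ω i ^ 2) ≤ B)
    (wstar : Fin d → ℝ) (hwstar : Real.sqrt (∑ i, wstar i ^ 2) ≤ R)
    (hσderiv : ∀ t ∈ Set.Icc (-(B * R)) (B * R), γ ≤ deriv σ t ∧ deriv σ t ≤ 1)
    (y : Ω → ℝ)
    (hy : ∀ ω, y ω = σ (∑ i, wstar i * X ω i) + ε ω)
    (hcond : μ[ε | MeasurableSpace.comap X inferInstance] =ᵐ[μ] 0)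
    (hint : ∀ w : Fin d → ℝ, Integrable (fun ω => (y ω - σ (∑ i, w i * X ω i)) ^ 2) μ)
    (hintgrad : ∀ w : Fin d → ℝ, ∀ i : Fin d, Integrable
      (fun ω => (σ (∑ j, w j * X ω j) - σ (∑ j, wstar j * X ω j))
        * deriv σ (∑ j, w j * X ω j) * X ω i) μ)
    (L : (Fin d → ℝ) → ℝ)
    (hL : ∀ w, L w = (1 / 2 : ℝ) * ∫ ω, (y ω - σ (∑ i, w i * X ω i)) ^ 2 ∂μ)
    (gradL : (Fin d → ℝ) → (Fin d → ℝ))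
    (hgradL : ∀ w i, gradL w i = ∫ ω, (σ (∑ j, w j * X ω j) - σ (∑ j, wstar j * X ω j))
        * deriv σ (∑ j, w j * X ω j) * X ω i ∂μ) :
    ∀ w : Fin d → ℝ, Real.sqrt (∑ i, w i ^ 2) ≤ R →
      2 * γ * (L w - L wstar) ≤ ∑ i, gradL w i * (w i - wstar i) :=
  stmt10_general μ X hX ε hε σ hσmono hσdiff B R γ hγ hXbound wstar hwstar hσderiv y hy hcond hint
    hintgrad L hL gradL hgradL
end

section
/- Let z ∈ ℝ^d with ‖z‖₂ = 1 and g(x) = (1/2)‖zzᵀ − xxᵀ‖_F². If x satisfies ∇g(x) = 0 and ∇²g(x) ⪰ 0, then x = z or x = −z; hence all second-order stationary points of g are global minima. -/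
open Matrix Finset

/-!
Pairing the stationarity equation `‖x‖² x = ⟨z, x⟩ z` with `z` and with `x` gives
`‖x‖² ⟨z, x⟩ = ⟨z, x⟩` and `‖x‖⁴ = ⟨z, x⟩²`. If `⟨z, x⟩ = 0` then `x = 0`, a saddle point: the
Hessian tested in the direction `z` is `-1`. Otherwise `‖x‖ = 1`, so `x = ⟨z, x⟩ z` with
`⟨z, x⟩ = ±1`, and `g(±z) = 0` is the minimum of the nonnegative `g`.
-/

namespace RankOneFactorization

variable {ι : Type*} [Fintype ι]

noncomputable def loss (z y : ι → ℝ) : ℝ :=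
  (1 / 2 : ℝ) * ∑ i, ∑ j, (z i * z j - y i * y j) ^ 2

lemma loss_nonneg (z y : ι → ℝ) : 0 ≤ loss z y := by
  unfold loss
  positivity

lemma loss_self (z : ι → ℝ) : loss z z = 0 := by
  simp [loss]

lemma loss_neg (z y : ι → ℝ) : loss z (-y) = loss z y := by
  simp [loss]

lemma sum_sq_eq_dotProduct {R : Type*} [Semiring R] (v : ι → R) : ∑ i, v i ^ 2 = v ⬝ᵥ v := by
  simp only [dotProduct, sq]

lemma dotProduct_hessian_mulVec [DecidableEq ι] {R : Type*} [CommRing R] (x z v : ι → R) (s : R) :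
    v ⬝ᵥ ((2 : R) • vecMulVec x x - vecMulVec z z + s • (1 : Matrix ι ι R)) *ᵥ v =
      2 * (x ⬝ᵥ v) ^ 2 - (z ⬝ᵥ v) ^ 2 + s * (v ⬝ᵥ v) := by
  simp only [add_mulVec, sub_mulVec, smul_mulVec, vecMulVec_mulVec, one_mulVec, op_smul_eq_smul,
    dotProduct_add, dotProduct_sub, dotProduct_smul, smul_eq_mul, dotProduct_comm v x,
    dotProduct_comm v z]
  ring

lemma eq_or_eq_neg_of_stationary {z x : ι → ℝ} (hz : z ⬝ᵥ z = 1)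
    (hstat : (x ⬝ᵥ x) • x = (z ⬝ᵥ x) • z)
    (hcurv : 0 ≤ 2 * (z ⬝ᵥ x) ^ 2 - 1 + x ⬝ᵥ x) : x = z ∨ x = -z := by
  set s := x ⬝ᵥ x
  set c := z ⬝ᵥ x
  have hsc : s * c = c := by
    have := congrArg (z ⬝ᵥ ·) hstat
    simpa only [dotProduct_smul, smul_eq_mul, hz, mul_one] using this
  have hss : s * s = c * c := by
    have := congrArg (x ⬝ᵥ ·) hstat
    simpa only [dotProduct_smul, smul_eq_mul, dotProduct_comm x z] using this
  have hc : c ≠ 0 := by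
    rintro hc
    have hs : s = 0 := mul_self_eq_zero.mp (by rw [hss, hc, mul_zero])
    rw [hc, hs] at hcurv
    norm_num at hcurv
  have hs : s = 1 := mul_right_cancel₀ hc (by rw [hsc, one_mul])
  have hx : x = c • z := by rw [← hstat, hs, one_smul]
  rcases mul_self_eq_one_iff.mp (by rw [← hss, hs, one_mul] : c * c = 1) with h | h
  · left; rw [hx, h, one_smul]
  · right; rw [hx, h, neg_one_smul]

end RankOneFactorization

open RankOneFactorization in
/-- For z with ‖z‖₂ = 1 and g(x) = (1/2)‖zzᵀ − xxᵀ‖_F², if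
∇g(x) = ‖x‖₂² x − ⟨z,x⟩ z = 0 and ∇²g(x) = 2xxᵀ − zzᵀ + ‖x‖₂² I ⪰ 0, then x = z or
x = −z; hence x is a global minimum of g. -/
theorem stmt13 {d : ℕ} (z : Fin d → ℝ) (hz : ∑ i, z i ^ 2 = 1)
    (x : Fin d → ℝ)
    (hstat : (∑ i, x i ^ 2) • x - (∑ i, z i * x i) • z = 0)
    (hHess : ((2 : ℝ) • vecMulVec x x - vecMulVec z z
        + (∑ i, x i ^ 2) • (1 : Matrix (Fin d) (Fin d) ℝ)).PosSemidef) :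
    (x = z ∨ x = -z) ∧
      ∀ y : Fin d → ℝ,
        (1 / 2 : ℝ) * ∑ i, ∑ j, (z i * z j - x i * x j) ^ 2 ≤
          (1 / 2 : ℝ) * ∑ i, ∑ j, (z i * z j - y i * y j) ^ 2 := by
  rw [sum_sq_eq_dotProduct] at hz hstat hHess
  have hcurv := hHess.dotProduct_mulVec_nonneg z
  rw [star_trivial, dotProduct_hessian_mulVec, hz, one_pow, mul_one, dotProduct_comm x z] at hcurv
  have hx := eq_or_eq_neg_of_stationary hz (sub_eq_zero.mp hstat) hcurv
  refine ⟨hx, fun y => ?_⟩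
  change loss z x ≤ loss z y
  rcases hx with h | h
  · rw [h, loss_self]; exact loss_nonneg z y
  · rw [h, loss_neg, loss_self]; exact loss_nonneg z y
end

section
/- Let z ∈ ℝ^d with ‖z‖₂ = 1 and let 0 ≤ ε ≤ 1/16. Suppose x ∈ ℝ^d satisfies (i) ⟨x, z⟩² ≥ ‖x‖₂⁴ − ε, (ii) ‖x‖₂² ≥ (1−ε)/3, and (iii) |⟨x, z⟩(1 − ‖x‖₂²)| ≤ ε. Then min(‖x − z‖₂², ‖x + z‖₂²) ≤ C·ε for some universal constant C. -/
open Finset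

/-- There is a universal constant C > 0 such that: for any z with
‖z‖₂ = 1, any 0 ≤ ε ≤ 1/16, and any x with (i) ⟨x, z⟩² ≥ ‖x‖₂⁴ − ε,
(ii) ‖x‖₂² ≥ (1−ε)/3, and (iii) |⟨x, z⟩(1 − ‖x‖₂²)| ≤ ε, we have
min(‖x − z‖₂², ‖x + z‖₂²) ≤ C·ε. -/
theorem stmt14 :
    ∃ C : ℝ, 0 < C ∧
      ∀ (d : ℕ) (z x : Fin d → ℝ) (ε : ℝ),
        (∑ i, z i ^ 2 = 1) → 0 ≤ ε → ε ≤ 1 / 16 →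
        ((∑ i, x i ^ 2) ^ 2 - ε ≤ (∑ i, x i * z i) ^ 2) →
        ((1 - ε) / 3 ≤ ∑ i, x i ^ 2) →
        (|(∑ i, x i * z i) * (1 - ∑ i, x i ^ 2)| ≤ ε) →
        min (∑ i, (x i - z i) ^ 2) (∑ i, (x i + z i) ^ 2) ≤ C * ε := by
  refine ⟨100, by norm_num, ?_⟩
  intro d z x ε hz hε0 hε1 h1 h2 h3
  set s : ℝ := ∑ i, x i ^ 2 with hs
  set t : ℝ := ∑ i, x i * z i with ht
  have hsub : ∑ i, (x i - z i) ^ 2 = s - 2 * t + 1 := by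
    rw [hs, ht, ← hz, Finset.mul_sum, ← Finset.sum_sub_distrib, ← Finset.sum_add_distrib]
    exact Finset.sum_congr rfl fun i _ => by ring
  have hadd : ∑ i, (x i + z i) ^ 2 = s + 2 * t + 1 := by
    rw [hs, ht, ← hz, Finset.mul_sum, ← Finset.sum_add_distrib, ← Finset.sum_add_distrib]
    exact Finset.sum_congr rfl fun i _ => by ring
  -- |t| ≥ 3/16
  have habs : |t| ^ 2 = t ^ 2 := sq_abs t
  have habs0 : 0 ≤ |t| := abs_nonneg t
  have hlow : (3:ℝ)/16 ≤ |t| := by nlinarith [sq_nonneg (ε - 1/16), sq_nonneg (|t| - 3/16)]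
  have h3' : |t| * |1 - s| ≤ ε := by rwa [← abs_mul]
  have hscl : |1 - s| ≤ 16 * ε / 3 := by
    nlinarith [abs_nonneg (1 - s)]
  have hsabs := abs_le.mp hscl
  -- t² ≥ 1 − 35ε/3
  have ht2 : 1 - 35 * ε / 3 ≤ t ^ 2 := by nlinarith [sq_nonneg s]
  have htlow : 1 - 35 * ε / 3 ≤ |t| := by nlinarith
  have key : s + 1 - 2 * |t| ≤ 100 * ε := by linarith
  rcases abs_cases t with ⟨hc, _⟩ | ⟨hc, _⟩
  · exact le_trans (min_le_left _ _) (by rw [hsub]; linarith [hc ▸ key])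
  · exact le_trans (min_le_right _ _) (by rw [hadd]; linarith [hc ▸ key])
end

section
/- Let a₁,...,a_n ∈ ℝ^d be orthonormal and T = Σᵢ aᵢ⊗aᵢ⊗aᵢ⊗aᵢ. Then the maximizers of f(x) = ⟨T, x^{⊗4}⟩ = Σᵢ ⟨aᵢ, x⟩⁴ over the unit sphere ‖x‖₂ = 1 are exactly ±a₁, ..., ±a_n, with maximum value 1. -/
open Finset

lemma bessel {d n : ℕ} (a : Fin n → Fin d → ℝ)
    (horth : ∀ i j, ∑ k, a i k * a j k = if i = j then (1 : ℝ) else 0)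
    (x : Fin d → ℝ) :
    ∑ i, (∑ k, a i k * x k) ^ 2 ≤ ∑ k, x k ^ 2 := by
  set c : Fin n → ℝ := fun i => ∑ k, a i k * x k with hc
  have h0 : (0:ℝ) ≤ ∑ k, (x k - ∑ i, c i * a i k) ^ 2 :=
    Finset.sum_nonneg fun k _ => sq_nonneg _
  have hmid : ∑ k, (∑ i, c i * a i k) * x k = ∑ i, c i ^ 2 := by
    simp_rw [Finset.sum_mul]
    rw [Finset.sum_comm]
    refine Finset.sum_congr rfl fun i _ => ?_
    simp_rw [mul_assoc, ← Finset.mul_sum]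
    exact (sq (c i)).symm
  have hlast : ∑ k, (∑ i, c i * a i k) * (∑ j, c j * a j k) = ∑ i, c i ^ 2 := by
    simp_rw [Finset.sum_mul, Finset.mul_sum]
    rw [Finset.sum_comm]
    refine Finset.sum_congr rfl fun i _ => ?_
    rw [Finset.sum_comm]
    have : ∀ j, ∑ k, c i * a i k * (c j * a j k) = c i * c j * ∑ k, a i k * a j k := by
      intro j; rw [Finset.mul_sum]; exact Finset.sum_congr rfl fun k _ => by ring
    simp_rw [this, horth]
    simp [sq]
  have hexp : ∑ k, (x k - ∑ i, c i * a i k) ^ 2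
      = ∑ k, x k ^ 2 - ∑ i, c i ^ 2 := by
    have h1 : ∀ k ∈ Finset.univ, (x k - ∑ i, c i * a i k) ^ 2
        = x k ^ 2 - 2 * ((∑ i, c i * a i k) * x k)
          + (∑ i, c i * a i k) * (∑ j, c j * a j k) := fun k _ => by ring
    rw [Finset.sum_congr rfl h1, Finset.sum_add_distrib, Finset.sum_sub_distrib,
      ← Finset.mul_sum, hmid, hlast]
    ring
  rw [hexp] at h0
  linarith

/-- For orthonormal a₁,...,a_n in ℝ^d and T = Σᵢ aᵢ⊗⁴, the maximizers
of f(x) = Σᵢ ⟨aᵢ, x⟩⁴ over the unit sphere are exactly ±a₁,...,±a_n, with maximum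
value 1. -/
theorem stmt18 {d n : ℕ} (hn : 1 ≤ n) (a : Fin n → Fin d → ℝ)
    (horth : ∀ i j, ∑ k, a i k * a j k = if i = j then (1 : ℝ) else 0) :
    (∀ x : Fin d → ℝ, ∑ k, x k ^ 2 = 1 →
        ∑ i, (∑ k, a i k * x k) ^ 4 ≤ 1) ∧
    (∀ x : Fin d → ℝ, ∑ k, x k ^ 2 = 1 →
        (∑ i, (∑ k, a i k * x k) ^ 4 = 1 ↔ ∃ i, x = a i ∨ x = -(a i))) := by
  have hub : ∀ x : Fin d → ℝ, ∑ k, x k ^ 2 = 1 →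
      ∑ i, (∑ k, a i k * x k) ^ 4 ≤ (∑ i, (∑ k, a i k * x k) ^ 2) ^ 2 ∧
      ∑ i, (∑ k, a i k * x k) ^ 2 ≤ 1 := by
    intro x hx
    constructor
    · have : ∀ i ∈ (univ : Finset (Fin n)), (∑ k, a i k * x k) ^ 4
          = ((∑ k, a i k * x k) ^ 2) ^ 2 := fun i _ => by ring
      rw [Finset.sum_congr rfl this]
      exact Finset.sum_sq_le_sq_sum_of_nonneg (fun i _ => sq_nonneg _)
    · have := bessel a horth x
      rw [hx] at this
      exact this
  constructor
  · intro x hx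
    obtain ⟨h1, h2⟩ := hub x hx
    have h0 : (0:ℝ) ≤ ∑ i, (∑ k, a i k * x k) ^ 2 :=
      Finset.sum_nonneg fun i _ => sq_nonneg _
    nlinarith
  · intro x hx
    constructor
    · intro heq
      obtain ⟨h1, h2⟩ := hub x hx
      set c : Fin n → ℝ := fun i => ∑ k, a i k * x k with hc
      have h0 : (0:ℝ) ≤ ∑ i, c i ^ 2 := Finset.sum_nonneg fun i _ => sq_nonneg _
      have hS : ∑ i, c i ^ 2 = 1 := by nlinarith
      -- each c i ^ 2 * (1 - c i ^ 2) = 0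
      have hterm : ∀ i, c i ^ 2 ≤ 1 := by
        intro i
        calc c i ^ 2 ≤ ∑ j, c j ^ 2 :=
          Finset.single_le_sum (f := fun j => c j ^ 2) (fun j _ => sq_nonneg _) (mem_univ i)
        _ = 1 := hS
      have hzero : ∑ i, c i ^ 2 * (1 - c i ^ 2) = 0 := by
        have : ∑ i, c i ^ 2 * (1 - c i ^ 2) = ∑ i, c i ^ 2 - ∑ i, c i ^ 4 := by
          rw [← Finset.sum_sub_distrib]
          exact Finset.sum_congr rfl fun i _ => by ring
        rw [this, hS, heq]; ring
      have hall : ∀ i, c i ^ 2 * (1 - c i ^ 2) = 0 := by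
        intro i
        have := (Finset.sum_eq_zero_iff_of_nonneg (fun j _ =>
          mul_nonneg (sq_nonneg _) (by linarith [hterm j]))).1 hzero i (mem_univ i)
        exact this
      -- exists i with c i ≠ 0
      have hex : ∃ i, c i ≠ 0 := by
        by_contra hno
        push_neg at hno
        have : ∑ i, c i ^ 2 = 0 := Finset.sum_eq_zero fun i _ => by rw [hno i]; ring
        rw [hS] at this; norm_num at this
      obtain ⟨i, hi⟩ := hex
      have hci : c i ^ 2 = 1 := by
        rcases mul_eq_zero.1 (hall i) with h | h
        · exact absurd (sq_eq_zero_iff.1 h) hi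
        · linarith
      -- x = c i • a i
      have hdist : ∑ k, (x k - c i * a i k) ^ 2 = 0 := by
        have hexp : ∀ k ∈ (univ : Finset (Fin d)), (x k - c i * a i k) ^ 2
            = x k ^ 2 - 2 * c i * (a i k * x k) + c i ^ 2 * (a i k * a i k) :=
          fun k _ => by ring
        rw [Finset.sum_congr rfl hexp, Finset.sum_add_distrib, Finset.sum_sub_distrib,
          ← Finset.mul_sum, ← Finset.mul_sum]
        have hcieq : ∑ k, a i k * x k = c i := rfl
        rw [hcieq]
        have hii := horth i i
        simp only [if_pos] at hii
        rw [hx, hii]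
        have : c i * c i = 1 := by nlinarith
        nlinarith
      have hxk : ∀ k, x k = c i * a i k := by
        intro k
        have := (Finset.sum_eq_zero_iff_of_nonneg (fun j _ => sq_nonneg
          (x j - c i * a i j))).1 hdist k (mem_univ k)
        have h := sq_eq_zero_iff.1 this
        linarith
      have hcases : c i = 1 ∨ c i = -1 := by
        have : (c i - 1) * (c i + 1) = 0 := by nlinarith
        rcases mul_eq_zero.1 this with h | h
        · left; linarith
        · right; linarith
      refine ⟨i, ?_⟩
      rcases hcases with h | h
      · left; funext k; rw [hxk k, h]; ring
      · right; funext k; rw [hxk k, h]; simp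
    · rintro ⟨i, h | h⟩ <;> subst h
      · have : ∀ j ∈ (univ : Finset (Fin n)), (∑ k, a j k * a i k) ^ 4
            = if j = i then (1:ℝ) else 0 := by
          intro j _
          rw [horth j i]
          by_cases hji : j = i <;> simp [hji]
        rw [Finset.sum_congr rfl this, Finset.sum_ite_eq' univ i (fun _ => (1:ℝ))]
        simp
      · have : ∀ j ∈ (univ : Finset (Fin n)), (∑ k, a j k * (-(a i)) k) ^ 4
            = if j = i then (1:ℝ) else 0 := by
          intro j _
          have : ∑ k, a j k * (-(a i)) k = -(∑ k, a j k * a i k) := by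
            rw [← Finset.sum_neg_distrib]
            exact Finset.sum_congr rfl fun k _ => by simp
          rw [this, horth j i]
          by_cases hji : j = i <;> simp [hji] <;> norm_num
        rw [Finset.sum_congr rfl this, Finset.sum_ite_eq' univ i (fun _ => (1:ℝ))]
        simp
end
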